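/- Let K ⊆ L be number fields, p a prime number, and n ≥ 1. Then Σ_{m=1}^{n} m·N_{p^m}(L) ≤ [L:K] · Σ_{m=1}^{n} m·N_{p^m}(K). -/

import Mathlib

open NumberField Filter Topology
open scoped Classical

noncomputable section

/-- Number of nonzero integral ideals of `𝓞 K` with absolute norm `n`. -/
def idealCount (K : Type*) [Field K] [NumberField K] (n : ℕ) : ℕ :=
  Nat.card {I : Ideal (𝓞 K) // Ideal.absNorm I = n}

/-- The Dedekind zeta function of a number field `K`, defined as the (unique) meromorphic
continuation of the Dirichlet series `∑ 1/(N 𝔞)^s`, if it exists (else junk value `0`). -/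
def dedekindZeta (K : Type*) [Field K] [NumberField K] : ℂ → ℂ :=
  if h : ∃ f : ℂ → ℂ, (∀ s : ℂ, s ≠ 1 → DifferentiableAt ℂ f s) ∧
      ∀ s : ℂ, 1 < s.re → f s = LSeries (fun n => (idealCount K n : ℂ)) s
  then h.choose else 0

/-- The residue `ρ_K` of the Dedekind zeta function at `s = 1` (a real number). -/
def zetaResidue (K : Type*) [Field K] [NumberField K] : ℝ :=
  (limUnder (𝓝[≠] (1 : ℂ)) (fun s => (s - 1) * _root_.dedekindZeta K s)).re

/-- The Euler-Kronecker constant `γ_K` of a number field `K`. -/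
def eulerKronecker (K : Type*) [Field K] [NumberField K] : ℝ :=
  (limUnder (𝓝[≠] (1 : ℂ))
    (fun s => deriv (_root_.dedekindZeta K) s / _root_.dedekindZeta K s + 1 / (s - 1))).re

/-- `Z_K(s) = -1/(s-1) - ζ_K'(s)/ζ_K(s)`. -/
def ZK (K : Type*) [Field K] [NumberField K] (s : ℂ) : ℂ :=
  -1 / (s - 1) - deriv (_root_.dedekindZeta K) s / _root_.dedekindZeta K s

/-- The genus `g_K = log √|d_K|` of a number field `K`. -/
def genus (K : Type*) [Field K] [NumberField K] : ℝ :=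
  Real.log |(discr K : ℝ)| / 2

/-- `N_q(K)`: the number of nonzero prime ideals of `𝓞 K` of absolute norm `q`. -/
def Nq (K : Type*) [Field K] [NumberField K] (q : ℕ) : ℕ :=
  Nat.card {P : Ideal (𝓞 K) // P.IsPrime ∧ P ≠ ⊥ ∧ Ideal.absNorm P = q}

/-- The order of vanishing of `f` at `z` (junk value `0` if `f` is not analytic at `z`,
or vanishes to infinite order). -/
def zeroOrder (f : ℂ → ℂ) (z : ℂ) : ℕ :=
  if h : AnalyticAt ℂ f z then (analyticOrderAt f z).toNat else 0

/-- Sum of `F ρ` over the nontrivial zeros `ρ` of `ζ_K` with `|Im ρ| ≤ T`,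
counted with multiplicity. -/
def zeroSumTrunc (K : Type*) [Field K] [NumberField K] (F : ℂ → ℂ) (T : ℝ) : ℂ :=
  ∑' ρ : {ρ : ℂ // 0 < ρ.re ∧ ρ.re < 1 ∧ _root_.dedekindZeta K ρ = 0 ∧ |ρ.im| ≤ T},
    (zeroOrder (_root_.dedekindZeta K) ρ : ℂ) * F ρ

/-- `N_K(T)`: the number of nontrivial zeros `ρ` of `ζ_K` with `|Im ρ| < T`,
counted with multiplicity. -/
def NKzeros (K : Type*) [Field K] [NumberField K] (T : ℝ) : ℝ :=
  ∑' ρ : {ρ : ℂ // 0 < ρ.re ∧ ρ.re < 1 ∧ _root_.dedekindZeta K ρ = 0 ∧ |ρ.im| < T},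
    (zeroOrder (_root_.dedekindZeta K) ρ : ℝ)

/-- A number field is almost normal if there is a tower of subfields
`ℚ = K₁ ⊂ K₂ ⊂ ⋯ ⊂ Kₙ = K` with each step Galois. -/
def AlmostNormal (K : Type*) [Field K] : Prop :=
  ∃ (n : ℕ) (F : Fin (n + 1) → Subfield K) (hmono : ∀ i : Fin n, F i.castSucc ≤ F i.succ),
    F 0 = ⊥ ∧ F (Fin.last n) = ⊤ ∧
      ∀ i : Fin n,
        letI := (Subfield.inclusion (hmono i)).toAlgebra
        IsGalois (F i.castSucc) (F i.succ)

/-- `K` contains no quadratic subfield. -/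
def NoQuadraticSubfield (K : Type*) [Field K] [CharZero K] : Prop :=
  ¬ ∃ N : Subfield K, Module.finrank ℚ N = 2

end

/-! Both sides count the primes `P` with `N P ∣ p ^ n`, each weighted by `v_p (N P)`. Grouping the
primes of `L` by the prime `q = P ∩ 𝓞 K` below them, `N P = N q ^ f(P|q)` gives
`v_p (N P) = f(P|q) · v_p (N q)`, and `∑_{P ∣ q} f(P|q) ≤ ∑_{P ∣ q} e(P|q) f(P|q) = [L : K]`. -/

namespace Ideal

variable {R S : Type*} [CommRing R] [CommRing S] [Algebra R S] [Module.Finite R S]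

theorem absNorm_under_dvd_absNorm [IsDedekindDomain R] [IsDedekindDomain S] [Module.Free ℤ R]
    [Module.Free ℤ S] (P : Ideal S) [P.IsPrime] : absNorm (P.under R) ∣ absNorm P := by
  rw [← absNorm_pow_inertiaDeg (P.under R) P]
  exact dvd_pow_self _ (inertiaDeg_pos P R).ne'

theorem sum_inertiaDeg_le_finrank [IsDomain R] [Module.Flat R S] (p : Ideal R) [p.IsPrime]
    [Finite (p.primesOver S)] {s : Finset (Ideal S)} (hs : ∀ P ∈ s, P ∈ p.primesOver S) :
    ∑ P ∈ s, P.inertiaDeg R ≤ Module.finrank R S := by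
  let := Fintype.ofFinite (p.primesOver S)
  have hs' : s ⊆ (p.primesOver S).toFinset := fun P hP => Set.mem_toFinset.2 (hs P hP)
  calc ∑ P ∈ s, P.inertiaDeg R
      ≤ ∑ P ∈ s, P.ramificationIdx R * P.inertiaDeg R := by
        refine Finset.sum_le_sum fun P hP => ?_
        have := (hs P hP).1
        exact Nat.le_mul_of_pos_left _ (ramificationIdx_pos P R)
    _ ≤ ∑ P ∈ (p.primesOver S).toFinset, P.ramificationIdx R * P.inertiaDeg R :=
        Finset.sum_le_sum_of_subset hs'
    _ = Module.finrank R S := by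
        rw [← Finset.sum_set_coe (s := p.primesOver S), sum_ramification_inertia_eq_finrank]

end Ideal

section primesNormDvd

open Ideal

variable {F : Type*} [Field F] [NumberField F]

variable (F) in
noncomputable def primesNormDvd (N : ℕ) : Finset (Ideal (𝓞 F)) :=
  {P ∈ (finite_setOfPred_absNorm_le N).toFinset | P.IsPrime ∧ absNorm P ∣ N}

theorem mem_primesNormDvd {N : ℕ} (hN : N ≠ 0) {P : Ideal (𝓞 F)} :
    P ∈ primesNormDvd F N ↔ P.IsPrime ∧ absNorm P ∣ N := by
  simp only [primesNormDvd, Finset.mem_filter, Set.Finite.mem_toFinset, Set.mem_ofPred_eq,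
    and_iff_right_iff_imp]
  exact fun h => Nat.le_of_dvd (Nat.pos_of_ne_zero hN) h.2

variable {p n : ℕ}

theorem exists_absNorm_eq_pow_of_mem_primesNormDvd (hp : p.Prime) {P : Ideal (𝓞 F)}
    (hP : P ∈ primesNormDvd F (p ^ n)) : ∃ m ∈ Finset.Icc 1 n, absNorm P = p ^ m := by
  obtain ⟨hPrime, hdvd⟩ := (mem_primesNormDvd (pow_ne_zero n hp.ne_zero)).1 hP
  obtain ⟨m, hmn, hm⟩ := (Nat.dvd_prime_pow hp).1 hdvd
  refine ⟨m, Finset.mem_Icc.2 ⟨Nat.pos_of_ne_zero fun h0 => ?_, hmn⟩, hm⟩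
  rw [h0, pow_zero, absNorm_eq_one_iff] at hm
  exact hPrime.ne_top hm

theorem mem_primesNormDvd_and_factorization_eq_iff (hp : p.Prime) {m : ℕ}
    (hm : m ∈ Finset.Icc 1 n) {P : Ideal (𝓞 F)} :
    P ∈ primesNormDvd F (p ^ n) ∧ (absNorm P).factorization p = m ↔
      P.IsPrime ∧ P ≠ ⊥ ∧ absNorm P = p ^ m := by
  constructor
  · rintro ⟨hP, rfl⟩
    obtain ⟨k, -, hk⟩ := exists_absNorm_eq_pow_of_mem_primesNormDvd hp hP
    refine ⟨((mem_primesNormDvd (pow_ne_zero n hp.ne_zero)).1 hP).1, ?_, ?_⟩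
    · rw [Ne, ← absNorm_eq_zero_iff, hk]
      exact pow_ne_zero k hp.ne_zero
    · rw [hk, Nat.factorization_pow_self hp]
  · rintro ⟨hPrime, -, hPm⟩
    refine ⟨(mem_primesNormDvd (pow_ne_zero n hp.ne_zero)).2 ⟨hPrime, ?_⟩, ?_⟩
    · rw [hPm]
      exact pow_dvd_pow p (Finset.mem_Icc.1 hm).2
    · rw [hPm, Nat.factorization_pow_self hp]

theorem sum_mul_Nq_eq_sum_factorization_absNorm (hp : p.Prime) :
    ∑ m ∈ Finset.Icc 1 n, m * Nq F (p ^ m) =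
      ∑ P ∈ primesNormDvd F (p ^ n), (absNorm P).factorization p := by
  have hmaps : ∀ P ∈ primesNormDvd F (p ^ n), (absNorm P).factorization p ∈ Finset.Icc 1 n := by
    intro P hP
    obtain ⟨m, hm, hPm⟩ := exists_absNorm_eq_pow_of_mem_primesNormDvd hp hP
    rwa [hPm, Nat.factorization_pow_self hp]
  rw [← Finset.sum_fiberwise_of_maps_to hmaps]
  refine Finset.sum_congr rfl fun m hm => ?_
  have hNq : Nq F (p ^ m) =
      ((primesNormDvd F (p ^ n)).filter fun P => (absNorm P).factorization p = m).card := by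
    rw [← Nat.card_eq_finsetCard]
    exact Nat.card_congr (Equiv.subtypeEquivRight fun P => by
      rw [Finset.mem_filter, mem_primesNormDvd_and_factorization_eq_iff hp hm])
  rw [hNq, Finset.sum_congr rfl fun P hP => (Finset.mem_filter.1 hP).2, Finset.sum_const,
    smul_eq_mul, mul_comm]

end primesNormDvd

open Ideal in
theorem sum_factorization_absNorm_le_finrank_mul (K L : Type*) [Field K] [Field L]
    [NumberField K] [NumberField L] [Algebra K L] {N : ℕ} (hN : N ≠ 0) (p : ℕ) :
    ∑ P ∈ primesNormDvd L N, (absNorm P).factorization p ≤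
      Module.finrank K L * ∑ q ∈ primesNormDvd K N, (absNorm q).factorization p := by
  have hmaps : ∀ P ∈ primesNormDvd L N, P.under (𝓞 K) ∈ primesNormDvd K N := by
    intro P hP
    obtain ⟨hPrime, hdvd⟩ := (mem_primesNormDvd hN).1 hP
    exact (mem_primesNormDvd hN).2 ⟨inferInstance, (absNorm_under_dvd_absNorm P).trans hdvd⟩
  rw [← Finset.sum_fiberwise_of_maps_to hmaps, Finset.mul_sum]
  refine Finset.sum_le_sum fun q hq => ?_
  obtain ⟨hqPrime, hqdvd⟩ := (mem_primesNormDvd hN).1 hq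
  have hq0 : q ≠ ⊥ := by
    rw [Ne, ← absNorm_eq_zero_iff]
    exact ne_zero_of_dvd_ne_zero hN hqdvd
  have := hqPrime.isMaximal hq0
  have hfactor : ∀ P ∈ (primesNormDvd L N).filter (fun P => P.under (𝓞 K) = q),
      (absNorm P).factorization p = P.inertiaDeg (𝓞 K) * (absNorm q).factorization p := by
    intro P hP
    obtain ⟨hPmem, rfl⟩ := Finset.mem_filter.1 hP
    have := ((mem_primesNormDvd hN).1 hPmem).1
    rw [← absNorm_pow_inertiaDeg (P.under (𝓞 K)) P, Nat.factorization_pow, Finsupp.smul_apply,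
      smul_eq_mul]
  have hover : ∀ P ∈ (primesNormDvd L N).filter (fun P => P.under (𝓞 K) = q),
      P ∈ q.primesOver (𝓞 L) := by
    intro P hP
    obtain ⟨hPmem, rfl⟩ := Finset.mem_filter.1 hP
    exact ⟨((mem_primesNormDvd hN).1 hPmem).1, ⟨rfl⟩⟩
  rw [Finset.sum_congr rfl hfactor, ← Finset.sum_mul]
  gcongr
  rw [IsFractionRing.finrank_eq (𝓞 K) K (𝓞 L) L]
  exact sum_inertiaDeg_le_finrank q hover

theorem sum_mul_Nq_le_general
    (K L : Type) [Field K] [Field L] [NumberField K] [NumberField L] [Algebra K L]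
    (p : ℕ) (hp : p.Prime) (n : ℕ) :
    ∑ m ∈ Finset.Icc 1 n, m * Nq L (p ^ m) ≤
      Module.finrank K L * ∑ m ∈ Finset.Icc 1 n, m * Nq K (p ^ m) := by
  rw [sum_mul_Nq_eq_sum_factorization_absNorm hp, sum_mul_Nq_eq_sum_factorization_absNorm hp]
  exact sum_factorization_absNorm_le_finrank_mul K L (pow_ne_zero n hp.ne_zero) p

/-- For number fields `K ⊆ L`, a prime `p` and `n ≥ 1`,
`∑_{m=1}^n m · N_{p^m}(L) ≤ [L:K] · ∑_{m=1}^n m · N_{p^m}(K)`. -/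
theorem sum_mul_Nq_le
    (K L : Type) [Field K] [Field L] [NumberField K] [NumberField L] [Algebra K L]
    (p : ℕ) (hp : p.Prime) (n : ℕ) (hn : 1 ≤ n) :
    ∑ m ∈ Finset.Icc 1 n, m * Nq L (p ^ m) ≤
      Module.finrank K L * ∑ m ∈ Finset.Icc 1 n, m * Nq K (p ^ m) :=
  sum_mul_Nq_le_general K L p hp n
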